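/- Let U be a real n×d matrix of full column rank, v ∈ ℝ^d, r ∈ ℝ^n entrywise positive with R = diag(r), p > 2, and q = p/(p−1). Let w ∈ ℝ^n be the c-regularized ℓ_q Lewis weights of U with c = d·r^{p/(p−2)} (i.e., w_i = σ((diag(c)+W)^{1/2−1/q}U)_i for all i), and let ŵ ∈ ℝ^n be entrywise positive with 0.9·w_i ≤ ŵ_i ≤ 1.1·w_i for all i. Suppose there exists x ∈ ℝ^n with U^⊤x = v, x^⊤Rx ≤ 1, and ‖x‖_p ≤ 1. Then the minimizer y of x ↦ x^⊤(d^{1−2/p}R + Ŵ^{1−2/p})x over { x : U^⊤x = v }, where Ŵ = diag(ŵ), satisfies U^⊤y = v, y^⊤Ry ≤ 3, and ‖y‖_p^p ≤ 4^p·d^{p/2−1}. -/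

import Mathlib

/-!
Write `α = 1 - 2/p`, `s_i = (c_i + w_i)^α` for the Lewis scaling and `A_i = d^α r_i + ŵ_i^α` for
the weights of the objective `Q(x) = ∑ A_i x_i²`. Since `c_i^α = d^α r_i` and `ŵ ≈ w`, the
weights `A_i` and `s_i` agree up to constant factors. The fixed-point equation says
`u_iᵀ H⁻¹ u_i = w_i s_i` for `H = Uᵀ diag(s)⁻¹ U`, and the leverage scores sum to `d`.

Comparing `y` with the feasible `x`, and bounding `∑ ŵ_i^α x_i²` by Hölder, gives
`Q(y) ≤ 3 d^α`, which contains the first claim. At the minimizer `A ∘ y = U ν`, so Cauchy–Schwarz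
in the inner product of `H` gives `(A_i y_i)² ≤ w_i s_i · νᵀHν ≲ w_i A_i Q(y)`, that is
`y_i² ≲ Q(y) w_i^{2/p}`. Hence `|y_i|^p = (y_i²)^{p/2-1} y_i² ≲ Q(y)^{p/2-1} w_i^α y_i²`, which
sums to `≲ Q(y)^{p/2} ≲ d^{p/2-1}`.
-/

open Matrix

/-- Leverage score of row `i` of matrix `M`: `σ(M)_i = m_i^⊤ (M^⊤ M)⁻¹ m_i`. -/
noncomputable def levScore {n d : ℕ} (M : Matrix (Fin n) (Fin d) ℝ) (i : Fin n) : ℝ :=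
  M i ⬝ᵥ ((Mᵀ * M)⁻¹ *ᵥ M i)

open Finset Real

namespace Matrix

lemma mulVec_injective_of_rank_eq_card {m k : Type*} [Fintype k] (U : Matrix m k ℝ)
    (hU : U.rank = Fintype.card k) : Function.Injective U.mulVec :=
  mulVec_injective_iff.mpr <| linearIndependent_iff_card_eq_finrank_span.mpr <| by
    rw [Set.finrank, ← rank_eq_finrank_span_cols, hU]

section

variable {m k : Type*} [Fintype m]

lemma PosSemidef.sq_dotProduct_mulVec_le {H : Matrix m m ℝ} (hH : H.PosSemidef) (a b : m → ℝ) :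
    (a ⬝ᵥ (H *ᵥ b)) ^ 2 ≤ (a ⬝ᵥ (H *ᵥ a)) * (b ⬝ᵥ (H *ᵥ b)) := by
  have hsymm : b ⬝ᵥ (H *ᵥ a) = a ⬝ᵥ (H *ᵥ b) := by
    rw [dotProduct_mulVec, ← mulVec_transpose, dotProduct_comm,
      ← conjTranspose_eq_transpose_of_trivial, hH.1.eq]
  have hquad : ∀ τ : ℝ, 0 ≤ (b ⬝ᵥ (H *ᵥ b)) * (τ * τ) + 2 * (a ⬝ᵥ (H *ᵥ b)) * τ +
      a ⬝ᵥ (H *ᵥ a) := fun τ => by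
    have := hH.dotProduct_mulVec_nonneg (a + τ • b)
    simp only [star_trivial, mulVec_add, mulVec_smul, add_dotProduct, dotProduct_add,
      smul_dotProduct, dotProduct_smul, smul_eq_mul, hsymm] at this
    linarith
  have := discrim_le_zero hquad
  rw [discrim] at this
  nlinarith

lemma PosDef.sq_dotProduct_le [DecidableEq m] {H : Matrix m m ℝ} (hH : H.PosDef) (u b : m → ℝ) :
    (u ⬝ᵥ b) ^ 2 ≤ (u ⬝ᵥ (H⁻¹ *ᵥ u)) * (b ⬝ᵥ (H *ᵥ b)) := by
  have hHu : H *ᵥ (H⁻¹ *ᵥ u) = u := by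
    rw [mulVec_mulVec, mul_nonsing_inv H hH.det_pos.ne'.isUnit, one_mulVec]
  have := hH.posSemidef.sq_dotProduct_mulVec_le b (H⁻¹ *ᵥ u)
  rwa [hHu, dotProduct_comm b u, dotProduct_comm _ u, mul_comm] at this

lemma dotProduct_mulVec_eq_zero_of_isMinOn {M : Matrix m m ℝ} (hM : M.IsSymm)
    {B : Matrix k m ℝ} {v : k → ℝ} {y : m → ℝ}
    (hmin : IsMinOn (fun x => x ⬝ᵥ (M *ᵥ x)) {x | B *ᵥ x = v} y) (hy : B *ᵥ y = v)
    {z : m → ℝ} (hz : B *ᵥ z = 0) : z ⬝ᵥ (M *ᵥ y) = 0 := by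
  have hsymm : y ⬝ᵥ (M *ᵥ z) = z ⬝ᵥ (M *ᵥ y) := by
    rw [dotProduct_mulVec, ← mulVec_transpose, dotProduct_comm, hM.eq]
  have hquad : ∀ τ : ℝ, 0 ≤ (z ⬝ᵥ (M *ᵥ z)) * (τ * τ) + 2 * (z ⬝ᵥ (M *ᵥ y)) * τ + 0 :=
    fun τ => by
    have := isMinOn_iff.mp hmin (y + τ • z) <| show B *ᵥ (y + τ • z) = v by
      rw [mulVec_add, mulVec_smul, hz, hy, smul_zero, add_zero]
    simp only [mulVec_add, mulVec_smul, add_dotProduct, dotProduct_add,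
      smul_dotProduct, dotProduct_smul, smul_eq_mul, hsymm] at this
    linarith
  have := discrim_le_zero hquad
  rw [discrim] at this
  nlinarith [sq_nonneg (z ⬝ᵥ (M *ᵥ y))]

variable [DecidableEq m]

lemma dotProduct_diagonal_mulVec_self (b x : m → ℝ) :
    x ⬝ᵥ (diagonal b *ᵥ x) = ∑ i, b i * x i ^ 2 := by
  simp only [dotProduct, mulVec_diagonal]
  exact sum_congr rfl fun i _ => by ring

lemma transpose_diagonal_mul_self (D : m → ℝ) (U : Matrix m k ℝ) :
    (diagonal D * U)ᵀ * (diagonal D * U) = Uᵀ * diagonal (fun j => D j ^ 2) * U := by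
  simp only [transpose_mul, diagonal_transpose, Matrix.mul_assoc, sq]
  rw [← Matrix.mul_assoc (diagonal D), diagonal_mul_diagonal]

variable [Fintype k]

lemma dotProduct_transpose_diagonal_mul_mulVec (U : Matrix m k ℝ) (t : m → ℝ) (μ : k → ℝ) :
    μ ⬝ᵥ ((Uᵀ * diagonal t * U) *ᵥ μ) = ∑ j, t j * (U *ᵥ μ) j ^ 2 := by
  rw [← mulVec_mulVec, ← mulVec_mulVec, dotProduct_mulVec, vecMul_transpose,
    dotProduct_diagonal_mulVec_self]

lemma posDef_transpose_mul_diagonal_mul {U : Matrix m k ℝ} (hU : Function.Injective U.mulVec)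
    {t : m → ℝ} (ht : ∀ j, 0 < t j) : (Uᵀ * diagonal t * U).PosDef := by
  simpa only [conjTranspose_eq_transpose_of_trivial] using
    (posDef_diagonal_iff.mpr ht).conjTranspose_mul_mul_same hU

variable [DecidableEq k]

lemma sq_mulVec_le {U : Matrix m k ℝ} (hU : Function.Injective U.mulVec) {t : m → ℝ}
    (ht : ∀ j, 0 < t j) (μ : k → ℝ) (i : m) :
    (U *ᵥ μ) i ^ 2 ≤
      (U i ⬝ᵥ ((Uᵀ * diagonal t * U)⁻¹ *ᵥ U i)) * ∑ j, t j * (U *ᵥ μ) j ^ 2 := by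
  rw [← dotProduct_transpose_diagonal_mul_mulVec]
  exact (posDef_transpose_mul_diagonal_mul hU ht).sq_dotProduct_le (U i) μ

lemma exists_mulVec_eq_of_isMinOn {M : Matrix m m ℝ} (hM : M.PosDef) {U : Matrix m k ℝ}
    (hU : Function.Injective U.mulVec) {v : k → ℝ} {y : m → ℝ}
    (hmin : IsMinOn (fun x => x ⬝ᵥ (M *ᵥ x)) {x | Uᵀ *ᵥ x = v} y) (hy : Uᵀ *ᵥ y = v) :
    ∃ μ, U *ᵥ μ = M *ᵥ y := by
  have hG : (Uᵀ * M⁻¹ * U).PosDef := by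
    simpa only [conjTranspose_eq_transpose_of_trivial] using hM.inv.conjTranspose_mul_mul_same hU
  obtain ⟨μ, hμ⟩ : ∃ μ, (Uᵀ * M⁻¹ * U) *ᵥ μ = v :=
    ⟨(Uᵀ * M⁻¹ * U)⁻¹ *ᵥ v, by
      rw [mulVec_mulVec, mul_nonsing_inv _ hG.det_pos.ne'.isUnit, one_mulVec]⟩
  -- `M⁻¹ U μ` is feasible, and `z` is `M`-orthogonal to `y` (first-order condition) and to it.
  set z := y - M⁻¹ *ᵥ (U *ᵥ μ)
  have hz : Uᵀ *ᵥ z = 0 := by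
    rw [mulVec_sub, hy, mulVec_mulVec, mulVec_mulVec, hμ, sub_self]
  have hMz : M *ᵥ z = M *ᵥ y - U *ᵥ μ := by
    rw [mulVec_sub, mulVec_mulVec, mulVec_mulVec, mul_nonsing_inv _ hM.det_pos.ne'.isUnit,
      Matrix.one_mul]
  have hzz : z ⬝ᵥ (M *ᵥ z) = 0 := by
    rw [hMz, dotProduct_sub,
      dotProduct_mulVec_eq_zero_of_isMinOn (isHermitian_iff_isSymm.mp hM.1) hmin hy hz,
      dotProduct_mulVec, ← mulVec_transpose, hz, zero_dotProduct, sub_zero]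
  have hz0 : z = 0 := by
    by_contra h
    exact (hM.dotProduct_mulVec_pos h).ne' (by simpa using hzz)
  exact ⟨μ, (sub_eq_zero.mp (by rw [← hMz, hz0, mulVec_zero])).symm⟩

end

end Matrix

lemma levScore_diagonal_mul {n d : ℕ} (D : Fin n → ℝ) (U : Matrix (Fin n) (Fin d) ℝ)
    (i : Fin n) :
    levScore (diagonal D * U) i =
      D i ^ 2 * (U i ⬝ᵥ ((Uᵀ * diagonal (fun j => D j ^ 2) * U)⁻¹ *ᵥ U i)) := by
  have hrow : (diagonal D * U) i = D i • U i := by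
    ext j
    simp [diagonal_mul]
  rw [levScore, transpose_diagonal_mul_self, hrow, mulVec_smul, dotProduct_smul,
    smul_dotProduct, smul_eq_mul, smul_eq_mul, ← mul_assoc, sq]

lemma sum_levScore_eq {n d : ℕ} (M : Matrix (Fin n) (Fin d) ℝ) (hM : IsUnit (Mᵀ * M).det) :
    ∑ i, levScore M i = d := by
  have hdiag (i : Fin n) : levScore M i = (M * (Mᵀ * M)⁻¹ * Mᵀ) i i := by
    rw [levScore, mul_apply, dotProduct_mulVec, dotProduct]
    simp [mul_apply, vecMul, dotProduct]
  simp only [hdiag]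
  change trace (M * (Mᵀ * M)⁻¹ * Mᵀ) = d
  rw [trace_mul_cycle, mul_nonsing_inv _ hM, trace_one, Fintype.card_fin]

lemma rpow_neg_half_sq {x : ℝ} (hx : 0 ≤ x) (α : ℝ) : (x ^ (-(α / 2))) ^ 2 = (x ^ α)⁻¹ := by
  rw [← rpow_natCast, ← rpow_mul hx, ← rpow_neg hx]
  ring_nf

section Lewis

variable {n d : ℕ} {U : Matrix (Fin n) (Fin d) ℝ} {c w : Fin n → ℝ} {α : ℝ}

lemma lewis_dotProduct_inv_mulVec_eq (hcw : ∀ i, 0 < c i + w i)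
    (hfix : ∀ i, w i = levScore (diagonal (fun j => (c j + w j) ^ (-(α / 2))) * U) i) (i : Fin n) :
    U i ⬝ᵥ ((Uᵀ * diagonal (fun j => ((c j + w j) ^ α)⁻¹) * U)⁻¹ *ᵥ U i) =
      w i * (c i + w i) ^ α := by
  have hwi := hfix i
  simp only [levScore_diagonal_mul, rpow_neg_half_sq (hcw _).le] at hwi
  rw [eq_inv_mul_iff_mul_eq₀ (rpow_pos_of_pos (hcw i) α).ne'] at hwi
  rw [← hwi, mul_comm]

lemma lewis_sum_eq (hU : Function.Injective U.mulVec) (hcw : ∀ i, 0 < c i + w i)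
    (hfix : ∀ i, w i = levScore (diagonal (fun j => (c j + w j) ^ (-(α / 2))) * U) i) :
    ∑ i, w i = d := by
  have hH := posDef_transpose_mul_diagonal_mul hU fun j => inv_pos.2 (rpow_pos_of_pos (hcw j) α)
  rw [sum_congr rfl fun i _ => hfix i, sum_levScore_eq]
  simpa only [transpose_diagonal_mul_self, rpow_neg_half_sq (hcw _).le] using
    hH.det_pos.ne'.isUnit

end Lewis

lemma rpow_le_mul_rpow_of_le_mul {x y k α : ℝ} (hx : 0 ≤ x) (hk : 1 ≤ k) (hα0 : 0 ≤ α)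
    (hα1 : α ≤ 1) (h : x ≤ k * y) : x ^ α ≤ k * y ^ α := by
  have hy : 0 ≤ y := nonneg_of_mul_nonneg_right (hx.trans h) (by linarith)
  calc x ^ α ≤ (k * y) ^ α := rpow_le_rpow hx h hα0
    _ = k ^ α * y ^ α := mul_rpow (by linarith) hy
    _ ≤ k * y ^ α := by gcongr; exact rpow_le_self_of_one_le hk hα1

lemma mul_rpow_rpow_inv {D r α : ℝ} (hD : 0 ≤ D) (hr : 0 ≤ r) (hα : α ≠ 0) :
    (D * r ^ α⁻¹) ^ α = D ^ α * r := by
  rw [mul_rpow hD (rpow_nonneg hr _), ← rpow_mul hr, inv_mul_cancel₀ hα, rpow_one]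

lemma regularized_weight_rpow_bounds {a c w ŵ α : ℝ} (hα0 : 0 ≤ α) (hα1 : α ≤ 1) (hc : 0 ≤ c)
    (ha : c ^ α = a) (hw : 0 ≤ w) (hlo : 0.9 * w ≤ ŵ) (hhi : ŵ ≤ 1.1 * w) :
    a + ŵ ^ α ≤ 2.1 * (c + w) ^ α ∧ (c + w) ^ α ≤ 10 / 9 * (a + ŵ ^ α) ∧
      w ^ α ≤ 10 / 9 * (a + ŵ ^ α) := by
  subst ha
  have hŵ : 0 ≤ ŵ := by linarith
  have hŵw : ŵ ^ α ≤ 1.1 * w ^ α := rpow_le_mul_rpow_of_le_mul hŵ (by norm_num) hα0 hα1 hhi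
  have hwŵ : w ^ α ≤ 10 / 9 * ŵ ^ α :=
    rpow_le_mul_rpow_of_le_mul hw (by norm_num) hα0 hα1 (by linarith)
  have hcs : c ^ α ≤ (c + w) ^ α := rpow_le_rpow hc (by linarith) hα0
  have hws : w ^ α ≤ (c + w) ^ α := rpow_le_rpow hw (by linarith) hα0
  have hsub : (c + w) ^ α ≤ c ^ α + w ^ α := rpow_add_le_add_rpow hc hw hα0 hα1
  have := rpow_nonneg hc α
  have := rpow_nonneg hŵ α
  exact ⟨by linarith, by linarith, by linarith⟩

lemma sum_rpow_mul_sq_le {ι : Type*} [Fintype ι] {p : ℝ} (hp : 2 < p) {b : ι → ℝ}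
    (hb : ∀ i, 0 ≤ b i) (x : ι → ℝ) :
    ∑ i, b i ^ (1 - 2 / p) * x i ^ 2 ≤ (∑ i, b i) ^ (1 - 2 / p) * (∑ i, |x i| ^ p) ^ (2 / p) := by
  have hp0 : 0 < p := by linarith
  have hpq : HolderConjugate (p / (p - 2)) (p / 2) := by
    rw [holderConjugate_iff]
    refine ⟨by rw [one_lt_div] <;> linarith, by field_simp; ring⟩
  have hexp : 1 / (p / (p - 2)) = 1 - 2 / p := by field_simp
  have hb' (i : ι) : (b i ^ (1 - 2 / p)) ^ (p / (p - 2)) = b i := by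
    rw [← rpow_mul (hb i), ← hexp, one_div_mul_cancel (by positivity), rpow_one]
  have hx' (i : ι) : (x i ^ 2) ^ (p / 2) = |x i| ^ p := by
    rw [← sq_abs, ← rpow_natCast, ← rpow_mul (abs_nonneg _), Nat.cast_ofNat,
      mul_div_cancel₀ _ two_ne_zero]
  have := inner_le_Lp_mul_Lq_of_nonneg univ hpq (f := fun i => b i ^ (1 - 2 / p))
    (g := fun i => x i ^ 2) (fun i _ => rpow_nonneg (hb i) _) (fun i _ => sq_nonneg _)
  simpa only [hb', hx', hexp, one_div_div] using this

lemma sum_abs_rpow_le_of_sq_le {ι : Type*} [Fintype ι] {p K : ℝ} (hp : 2 ≤ p) (hK : 0 ≤ K)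
    {w y : ι → ℝ} (hw : ∀ i, 0 ≤ w i) (h : ∀ i, y i ^ 2 ≤ K * w i ^ (2 / p))
    (hsum : ∑ i, w i ^ (1 - 2 / p) * y i ^ 2 ≤ K) : ∑ i, |y i| ^ p ≤ K ^ (p / 2) := by
  have hp0 : 0 < p := by linarith
  have hterm (i : ι) : |y i| ^ p ≤ K ^ (p / 2 - 1) * (w i ^ (1 - 2 / p) * y i ^ 2) :=
    calc |y i| ^ p = (y i ^ 2) ^ (p / 2 - 1) * y i ^ 2 := by
          rw [← rpow_add_one' (sq_nonneg _) (by linarith), sub_add_cancel, ← sq_abs,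
            ← rpow_natCast, ← rpow_mul (abs_nonneg _), Nat.cast_ofNat,
            mul_div_cancel₀ _ two_ne_zero]
      _ ≤ (K * w i ^ (2 / p)) ^ (p / 2 - 1) * y i ^ 2 := by
          gcongr
          · linarith
          · exact h i
      _ = K ^ (p / 2 - 1) * (w i ^ (1 - 2 / p) * y i ^ 2) := by
          rw [mul_rpow hK (rpow_nonneg (hw i) _), ← rpow_mul (hw i)]
          field_simp
  calc ∑ i, |y i| ^ p ≤ K ^ (p / 2 - 1) * ∑ i, w i ^ (1 - 2 / p) * y i ^ 2 := by
        rw [mul_sum]; exact sum_le_sum fun i _ => hterm i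
    _ ≤ K ^ (p / 2 - 1) * K := by gcongr
    _ = K ^ (p / 2) := by rw [← rpow_add_one' hK (by linarith), sub_add_cancel]

lemma rpow_half_le_four_rpow {p K D : ℝ} (hp : 0 < p) (hK : 0 ≤ K) (hD : 0 ≤ D)
    (h : K ≤ 16 * D ^ (1 - 2 / p)) : K ^ (p / 2) ≤ 4 ^ p * D ^ (p / 2 - 1) := by
  calc K ^ (p / 2) ≤ (16 * D ^ (1 - 2 / p)) ^ (p / 2) := by gcongr
    _ = 4 ^ p * D ^ (p / 2 - 1) := by
      rw [mul_rpow (by norm_num) (rpow_nonneg hD _), ← rpow_mul hD,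
        show (16 : ℝ) = 4 ^ (2 : ℝ) by norm_num, ← rpow_mul (by norm_num)]
      congr 2 <;> field_simp

lemma regularized_objective_le {ι : Type*} [Fintype ι] {p D : ℝ} (hp : 2 < p) (hD : 0 ≤ D)
    {r w ŵ x : ι → ℝ} (hŵ : ∀ i, 0 ≤ ŵ i) (hŵw : ∀ i, ŵ i ≤ 1.1 * w i) (hwD : ∑ i, w i = D)
    (hrx : ∑ i, r i * x i ^ 2 ≤ 1) (hx : (∑ i, |x i| ^ p) ^ (1 / p) ≤ 1) :
    ∑ i, (D ^ (1 - 2 / p) * r i + ŵ i ^ (1 - 2 / p)) * x i ^ 2 ≤ 3 * D ^ (1 - 2 / p) := by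
  have hp0 : 0 < p := by linarith
  have hα0 : 0 ≤ 1 - 2 / p := by rw [sub_nonneg, div_le_one hp0]; linarith
  have hα1 : 1 - 2 / p ≤ 1 := by linarith [div_pos two_pos hp0]
  have hHolder := sum_rpow_mul_sq_le hp hŵ x
  have hsumŵ : (∑ i, ŵ i) ^ (1 - 2 / p) ≤ 1.1 * D ^ (1 - 2 / p) :=
    rpow_le_mul_rpow_of_le_mul (sum_nonneg fun i _ => hŵ i) (by norm_num) hα0 hα1
      (by rw [← hwD, mul_sum]; exact sum_le_sum fun i _ => hŵw i)
  have hxp : (∑ i, |x i| ^ p) ^ (2 / p) ≤ 1 := by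
    rw [show 2 / p = 1 / p * 2 by ring,
      rpow_mul (sum_nonneg fun i _ => rpow_nonneg (abs_nonneg _) _)]
    exact rpow_le_one (rpow_nonneg (sum_nonneg fun i _ => rpow_nonneg (abs_nonneg _) _) _) hx
      zero_le_two
  have hDα : 0 ≤ D ^ (1 - 2 / p) := rpow_nonneg hD _
  calc ∑ i, (D ^ (1 - 2 / p) * r i + ŵ i ^ (1 - 2 / p)) * x i ^ 2
      = D ^ (1 - 2 / p) * ∑ i, r i * x i ^ 2 + ∑ i, ŵ i ^ (1 - 2 / p) * x i ^ 2 := by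
        rw [mul_sum, ← sum_add_distrib]
        exact sum_congr rfl fun i _ => by ring
    _ ≤ D ^ (1 - 2 / p) * 1 + 1.1 * D ^ (1 - 2 / p) * 1 := by
        gcongr
        exact hHolder.trans (mul_le_mul hsumŵ hxp (rpow_nonneg (sum_nonneg
          fun i _ => rpow_nonneg (abs_nonneg _) _) _) (by positivity))
    _ ≤ 3 * D ^ (1 - 2 / p) := by linarith

lemma sum_mul_sq_le_of_objective_le {ι : Type*} [Fintype ι] {D C : ℝ} (hD : 0 < D)
    {r b y : ι → ℝ} (hb : ∀ i, 0 ≤ b i) (h : ∑ i, (D * r i + b i) * y i ^ 2 ≤ C * D) :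
    ∑ i, r i * y i ^ 2 ≤ C := by
  have : D * ∑ i, r i * y i ^ 2 ≤ ∑ i, (D * r i + b i) * y i ^ 2 := by
    rw [mul_sum]
    exact sum_le_sum fun i _ => by nlinarith [mul_nonneg (hb i) (sq_nonneg (y i))]
  nlinarith

lemma sq_le_mul_rpow_of_mulVec_eq {m k : Type*} [Fintype m] [DecidableEq m] [Fintype k]
    [DecidableEq k] {U : Matrix m k ℝ} (hU : Function.Injective U.mulVec) {s A w y : m → ℝ}
    {α κ μ : ℝ} (hs : ∀ i, 0 < s i) (hA : ∀ i, 0 < A i) (hw : ∀ i, 0 < w i)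
    (hlev : ∀ i, U i ⬝ᵥ ((Uᵀ * diagonal (fun j => (s j)⁻¹) * U)⁻¹ *ᵥ U i) = w i * s i)
    (hAs : ∀ i, A i ≤ κ * s i) (hsA : ∀ i, s i ≤ μ * A i) (hwA : ∀ i, w i ^ α ≤ μ * A i)
    {ν : k → ℝ} (hν : U *ᵥ ν = diagonal A *ᵥ y) (i : m) :
    y i ^ 2 ≤ κ * μ ^ 2 * (∑ j, A j * y j ^ 2) * w i ^ (1 - α) := by
  set Q := ∑ j, A j * y j ^ 2
  have hκ : 0 ≤ κ := nonneg_of_mul_nonneg_left ((hA i).le.trans (hAs i)) (hs i)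
  have hμ : 0 ≤ μ := nonneg_of_mul_nonneg_left ((hs i).le.trans (hsA i)) (hA i)
  have hQ : 0 ≤ Q := sum_nonneg fun j _ => mul_nonneg (hA j).le (sq_nonneg _)
  have hwα : 0 < w i ^ α := rpow_pos_of_pos (hw i) α
  have hCS : (A i * y i) ^ 2 ≤ w i * s i * (κ * Q) := by
    have := sq_mulVec_le hU (fun j => inv_pos.2 (hs j)) ν i
    simp only [hlev, hν, mulVec_diagonal] at this
    refine this.trans (mul_le_mul_of_nonneg_left ?_ (mul_pos (hw i) (hs i)).le)
    rw [mul_sum]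
    refine sum_le_sum fun j _ => ?_
    have : (s j)⁻¹ * A j ≤ κ := by rw [inv_mul_le_iff₀ (hs j)]; linarith [hAs j]
    calc (s j)⁻¹ * (A j * y j) ^ 2 = (s j)⁻¹ * A j * (A j * y j ^ 2) := by ring
      _ ≤ κ * (A j * y j ^ 2) := by gcongr; exact mul_nonneg (hA j).le (sq_nonneg _)
  have hAy : A i * y i ^ 2 ≤ κ * μ * Q * w i := by
    refine le_of_mul_le_mul_left ?_ (hA i)
    calc A i * (A i * y i ^ 2) = (A i * y i) ^ 2 := by ring
      _ ≤ w i * s i * (κ * Q) := hCS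
      _ ≤ w i * (μ * A i) * (κ * Q) := by have := hw i; gcongr; exact hsA i
      _ = A i * (κ * μ * Q * w i) := by ring
  refine le_of_mul_le_mul_left ?_ hwα
  calc w i ^ α * y i ^ 2 ≤ μ * (A i * y i ^ 2) := by
        rw [← mul_assoc]; exact mul_le_mul_of_nonneg_right (hwA i) (sq_nonneg _)
    _ ≤ μ * (κ * μ * Q * w i) := by gcongr
    _ = w i ^ α * (κ * μ ^ 2 * Q * w i ^ (1 - α)) := by
        have hsplit : w i ^ α * w i ^ (1 - α) = w i := by
          rw [← rpow_add (hw i), add_sub_cancel, rpow_one]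
        linear_combination κ * μ ^ 2 * Q * hsplit.symm

lemma sum_abs_rpow_le_of_lewis {m k : Type*} [Fintype m] [DecidableEq m] [Fintype k]
    [DecidableEq k] {p D : ℝ} (hp : 2 < p) (hD : 0 ≤ D) {U : Matrix m k ℝ}
    (hU : Function.Injective U.mulVec) {s A w y : m → ℝ} (hs : ∀ i, 0 < s i)
    (hA : ∀ i, 0 < A i) (hw : ∀ i, 0 < w i)
    (hlev : ∀ i, U i ⬝ᵥ ((Uᵀ * diagonal (fun j => (s j)⁻¹) * U)⁻¹ *ᵥ U i) = w i * s i)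
    (hbounds : ∀ i, A i ≤ 2.1 * s i ∧ s i ≤ 10 / 9 * A i ∧ w i ^ (1 - 2 / p) ≤ 10 / 9 * A i)
    {ν : k → ℝ} (hν : U *ᵥ ν = diagonal A *ᵥ y)
    (hQ : ∑ i, A i * y i ^ 2 ≤ 3 * D ^ (1 - 2 / p)) :
    ∑ i, |y i| ^ p ≤ 4 ^ p * D ^ (p / 2 - 1) := by
  have hQ0 : 0 ≤ ∑ i, A i * y i ^ 2 := sum_nonneg fun i _ => mul_nonneg (hA i).le (sq_nonneg _)
  -- `K = κ μ² Q` with the constants of `hbounds`; `4 ^ p` appears because `2.1 · (10/9)² · 3 < 16`.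
  set K := 2.1 * (10 / 9) ^ 2 * ∑ i, A i * y i ^ 2 with hK
  have hpt (i : m) : y i ^ 2 ≤ K * w i ^ (2 / p) := by
    simpa only [sub_sub_cancel] using sq_le_mul_rpow_of_mulVec_eq hU hs hA hw hlev
      (fun i => (hbounds i).1) (fun i => (hbounds i).2.1) (fun i => (hbounds i).2.2) hν i
  have hwy : ∑ i, w i ^ (1 - 2 / p) * y i ^ 2 ≤ K :=
    calc ∑ i, w i ^ (1 - 2 / p) * y i ^ 2 ≤ ∑ i, 10 / 9 * A i * y i ^ 2 :=
          sum_le_sum fun i _ => mul_le_mul_of_nonneg_right (hbounds i).2.2 (sq_nonneg _)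
      _ = 10 / 9 * ∑ i, A i * y i ^ 2 := by rw [mul_sum]; exact sum_congr rfl fun i _ => by ring
      _ ≤ K := by rw [hK]; linarith
  exact (sum_abs_rpow_le_of_sq_le hp.le (by positivity) (fun i => (hw i).le) hpt hwy).trans
    (rpow_half_le_four_rpow (by linarith) (by positivity) hD (by rw [hK]; linarith))

theorem stmt18_general {n d : ℕ} (U : Matrix (Fin n) (Fin d) ℝ) (hU : U.rank = d) (hd : 0 < d)
    (v : Fin d → ℝ) (r : Fin n → ℝ) (hr : ∀ i, 0 < r i)
    (p : ℝ) (hp : 2 < p) (q : ℝ) (hq : q = p / (p - 1))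
    (w : Fin n → ℝ)
    (hfix : ∀ i, w i = levScore (Matrix.diagonal
      (fun j => ((d : ℝ) * r j ^ (p/(p - 2)) + w j) ^ ((1:ℝ)/2 - 1/q)) * U) i)
    (wHat : Fin n → ℝ) (hwHatpos : ∀ i, 0 < wHat i)
    (hwHat : ∀ i, 0.9 * w i ≤ wHat i ∧ wHat i ≤ 1.1 * w i)
    (hex : ∃ x : Fin n → ℝ, Uᵀ *ᵥ x = v ∧ x ⬝ᵥ (Matrix.diagonal r *ᵥ x) ≤ 1 ∧
      (∑ i, |x i| ^ p) ^ (1/p) ≤ 1)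
    (y : Fin n → ℝ) (hyfeas : Uᵀ *ᵥ y = v)
    (hymin : ∀ x : Fin n → ℝ, Uᵀ *ᵥ x = v →
      y ⬝ᵥ (((d : ℝ) ^ (1 - 2/p) • Matrix.diagonal r +
        Matrix.diagonal (fun i => wHat i ^ (1 - 2/p))) *ᵥ y) ≤
      x ⬝ᵥ (((d : ℝ) ^ (1 - 2/p) • Matrix.diagonal r +
        Matrix.diagonal (fun i => wHat i ^ (1 - 2/p))) *ᵥ x)) :
    y ⬝ᵥ (Matrix.diagonal r *ᵥ y) ≤ 3 ∧
    ∑ i, |y i| ^ p ≤ (4:ℝ) ^ p * (d : ℝ) ^ (p/2 - 1) := by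
  obtain ⟨x, hxv, hxR, hxp⟩ := hex
  have hp0 : 0 < p := by linarith
  have hα0 : 0 < 1 - 2 / p := by rw [sub_pos, div_lt_one hp0]; linarith
  have hα1 : 1 - 2 / p ≤ 1 := by linarith [div_pos two_pos hp0]
  set α := 1 - 2 / p with hα
  set A : Fin n → ℝ := fun j => (d : ℝ) ^ α * r j + wHat j ^ α
  have hw (i : Fin n) : 0 < w i := by linarith [hwHatpos i, (hwHat i).2]
  have hc (i : Fin n) : 0 ≤ (d : ℝ) * r i ^ (p / (p - 2)) := by have := hr i; positivity
  have hcw (i : Fin n) := add_pos_of_nonneg_of_pos (hc i) (hw i)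
  have hA (i : Fin n) : 0 < A i := by have := hr i; have := hwHatpos i; positivity
  have hinj := U.mulVec_injective_of_rank_eq_card (by rw [hU, Fintype.card_fin])
  rw [show (1 : ℝ) / 2 - 1 / q = -(α / 2) by rw [hq, hα]; field_simp; ring] at hfix
  have hobj : (d : ℝ) ^ α • diagonal r + diagonal (fun i => wHat i ^ α) = diagonal A := by
    rw [← diagonal_smul, diagonal_add]; rfl
  have hmin : IsMinOn (fun x => x ⬝ᵥ (diagonal A *ᵥ x)) {x | Uᵀ *ᵥ x = v} y :=
    isMinOn_iff.mpr fun x hx => by simpa only [hobj] using hymin x hx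
  have hQ : ∑ i, A i * y i ^ 2 ≤ 3 * (d : ℝ) ^ α := by
    have hyx := isMinOn_iff.mp hmin x hxv
    simp only [dotProduct_diagonal_mulVec_self] at hyx hxR
    exact hyx.trans (regularized_objective_le hp (Nat.cast_nonneg d) (fun i => (hwHatpos i).le)
      (fun i => (hwHat i).2) (lewis_sum_eq hinj hcw hfix) hxR hxp)
  obtain ⟨ν, hν⟩ := exists_mulVec_eq_of_isMinOn (posDef_diagonal_iff.mpr hA) hinj hmin hyfeas
  have hcα (i : Fin n) : ((d : ℝ) * r i ^ (p / (p - 2))) ^ α = (d : ℝ) ^ α * r i := by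
    rw [show p / (p - 2) = α⁻¹ by rw [hα]; field_simp,
      mul_rpow_rpow_inv (Nat.cast_nonneg d) (hr i).le hα0.ne']
  refine ⟨?_, sum_abs_rpow_le_of_lewis hp (Nat.cast_nonneg d) hinj
    (fun j => rpow_pos_of_pos (hcw j) α) hA hw (lewis_dotProduct_inv_mulVec_eq hcw hfix)
    (fun i => regularized_weight_rpow_bounds hα0.le hα1 (hc i) (hcα i) (hw i).le (hwHat i).1
      (hwHat i).2) hν hQ⟩
  rw [dotProduct_diagonal_mulVec_self]
  exact sum_mul_sq_le_of_objective_le (rpow_pos_of_pos (Nat.cast_pos.mpr hd) α)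
    (fun i => rpow_nonneg (hwHatpos i).le α) hQ

theorem stmt18 {n d : ℕ} (U : Matrix (Fin n) (Fin d) ℝ) (hU : U.rank = d) (hd : 0 < d)
    (v : Fin d → ℝ) (r : Fin n → ℝ) (hr : ∀ i, 0 < r i)
    (p : ℝ) (hp : 2 < p) (q : ℝ) (hq : q = p / (p - 1))
    (w : Fin n → ℝ) (hw0 : ∀ i, 0 ≤ w i)
    (hfix : ∀ i, w i = levScore (Matrix.diagonal
      (fun j => ((d : ℝ) * r j ^ (p/(p - 2)) + w j) ^ ((1:ℝ)/2 - 1/q)) * U) i)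
    (wHat : Fin n → ℝ) (hwHatpos : ∀ i, 0 < wHat i)
    (hwHat : ∀ i, 0.9 * w i ≤ wHat i ∧ wHat i ≤ 1.1 * w i)
    (hex : ∃ x : Fin n → ℝ, Uᵀ *ᵥ x = v ∧ x ⬝ᵥ (Matrix.diagonal r *ᵥ x) ≤ 1 ∧
      (∑ i, |x i| ^ p) ^ (1/p) ≤ 1)
    (y : Fin n → ℝ) (hyfeas : Uᵀ *ᵥ y = v)
    (hymin : ∀ x : Fin n → ℝ, Uᵀ *ᵥ x = v →
      y ⬝ᵥ (((d : ℝ) ^ (1 - 2/p) • Matrix.diagonal r +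
        Matrix.diagonal (fun i => wHat i ^ (1 - 2/p))) *ᵥ y) ≤
      x ⬝ᵥ (((d : ℝ) ^ (1 - 2/p) • Matrix.diagonal r +
        Matrix.diagonal (fun i => wHat i ^ (1 - 2/p))) *ᵥ x)) :
    y ⬝ᵥ (Matrix.diagonal r *ᵥ y) ≤ 3 ∧
    ∑ i, |y i| ^ p ≤ (4:ℝ) ^ p * (d : ℝ) ^ (p/2 - 1) :=
  stmt18_general U hU hd v r hr p hp q hq w hfix wHat hwHatpos hwHat hex y hyfeas hymin
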